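/- arXiv:2009.12814 — 5 statements merged into one kernel-verified Lean document; each statement's English description precedes it below -/
import Mathlib

section
/- Let G1 and G2 be birth-death chains on ℕ with positive measures m1, m2 : ℕ → ℝ and positive edge weights b1, b2 : ℕ → ℝ (where b(r) denotes the weight of the edge between r and r+1). Suppose m1(0) = m2(0), and for all r ≥ 0 the outer curvatures satisfy b1(r)/m1(r) ≥ b2(r)/m2(r), and for all r ≥ 1 the inner curvatures satisfy b1(r-1)/m1(r) ≤ b2(r-1)/m2(r). Then m1(r) ≥ m2(r) for all r ≥ 0. -/
theorem stmt_0 (m1 b1 m2 b2 : ℕ → ℝ)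
    (hm1 : ∀ r, 0 < m1 r) (hb1 : ∀ r, 0 < b1 r)
    (hm2 : ∀ r, 0 < m2 r) (hb2 : ∀ r, 0 < b2 r)
    (h0 : m1 0 = m2 0)
    (hout : ∀ r, b1 r / m1 r ≥ b2 r / m2 r)
    (hin : ∀ r ≥ 1, b1 (r - 1) / m1 r ≤ b2 (r - 1) / m2 r) :
    ∀ r, m1 r ≥ m2 r := by
  intro r
  induction r with
  | zero => exact ge_of_eq h0
  | succ n ih =>
    have hout' := hout n
    have hin' := hin (n + 1) (Nat.le_add_left 1 n)
    simp only [Nat.add_sub_cancel] at hin'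
    -- b1 n * m2 n ≥ b2 n * m1 n
    have h1 : b1 n * m2 n ≥ b2 n * m1 n := by
      rw [ge_iff_le, div_le_div_iff₀ (hm2 n) (hm1 n)] at hout'
      linarith
    have hb : b1 n ≥ b2 n := by
      have := mul_le_mul_of_nonneg_left ih (le_of_lt (hb2 n))
      nlinarith [hm2 n]
    -- from hin': b1 n * m2 (n+1) ≤ b2 n * m1 (n+1)
    have h2 : b1 n * m2 (n + 1) ≤ b2 n * m1 (n + 1) := by
      rw [div_le_div_iff₀ (hm1 (n+1)) (hm2 (n+1))] at hin'
      linarith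
    nlinarith [hm2 (n+1), hb2 n]
end

section
/- Let G1 and G2 be birth-death chains on ℕ with positive measures m1, m2 and positive edge weights b1, b2. Suppose there is R > 0 such that for all r ≥ R: b1(r)/m1(r) ≥ b2(r)/m2(r) and b1(r-1)/m1(r) ≤ b2(r-1)/m2(r) (for r ≥ max(R,1)). Then there exists a constant C > 0 such that C · m1(r) ≥ m2(r) for all r ≥ 0. -/
theorem stmt_1 (m1 b1 m2 b2 : ℕ → ℝ) (R : ℕ) (hR : 0 < R)
    (hm1 : ∀ r, 0 < m1 r) (hb1 : ∀ r, 0 < b1 r)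
    (hm2 : ∀ r, 0 < m2 r) (hb2 : ∀ r, 0 < b2 r)
    (hout : ∀ r ≥ R, b1 r / m1 r ≥ b2 r / m2 r)
    (hin : ∀ r ≥ R, b1 (r - 1) / m1 r ≤ b2 (r - 1) / m2 r) :
    ∃ C > (0 : ℝ), ∀ r, C * m1 r ≥ m2 r := by
  set q : ℕ → ℝ := fun r => m2 r / m1 r with hq
  have hqpos : ∀ r, 0 < q r := fun r => div_pos (hm2 r) (hm1 r)
  have key : ∀ r ≥ R, q (r + 1) ≤ q r := by
    intro r hr
    have h1 := hout r hr
    have h2 := hin (r + 1) (le_trans hr (Nat.le_succ r))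
    simp only [Nat.add_sub_cancel] at h2
    -- h1 : b1 r / m1 r ≥ b2 r / m2 r, h2 : b1 r / m1 (r+1) ≤ b2 r / m2 (r+1)
    have e1 : b2 r * m1 r ≤ b1 r * m2 r := by
      rw [ge_iff_le, div_le_div_iff₀ (hm2 r) (hm1 r)] at h1; linarith
    have e2 : b1 r * m2 (r + 1) ≤ b2 r * m1 (r + 1) := by
      rw [div_le_div_iff₀ (hm1 (r + 1)) (hm2 (r + 1))] at h2; linarith
    have hm1r := hm1 r; have hm1r1 := hm1 (r + 1)
    have hb1r := hb1 r; have hb2r := hb2 r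
    rw [hq]
    rw [div_le_div_iff₀ hm1r1 hm1r]
    nlinarith [mul_pos hm1r hm1r1, mul_pos hb1r hb2r, hm2 r, hm2 (r+1)]
  have mono : ∀ r ≥ R, q r ≤ q R := by
    intro r hr
    induction r, hr using Nat.le_induction with
    | base => exact le_refl _
    | succ n hn ih => exact le_trans (key n hn) ih
  obtain ⟨C, hC⟩ : ∃ C, ∀ i ∈ Finset.range (R + 1), q i ≤ C :=
    ⟨(Finset.range (R + 1)).sup' ⟨0, by simp⟩ q, fun i hi => Finset.le_sup' q hi⟩
  have hCpos : 0 < C := lt_of_lt_of_le (hqpos 0) (hC 0 (by simp))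
  refine ⟨C, hCpos, fun r => ?_⟩
  have hqr : q r ≤ C := by
    rcases le_or_gt r R with h | h
    · exact hC r (Finset.mem_range.mpr (Nat.lt_succ_of_le h))
    · exact le_trans (mono r h.le) (hC R (by simp))
  rw [hq] at hqr
  have := (div_le_iff₀ (hm1 r)).mp hqr
  linarith
end

section
/- There exist two birth-death chains G and G' on ℕ with positive measures m, m' and positive edge weights b, b' such that m(0) = m'(0) = 1, their Ollivier sphere curvatures agree (k(r) = k'(r) for all r ≥ 1) and their outer curvatures at 0 agree (k₊(0) = k'₊(0) = 1), yet m'(r) ≥ m(r) for all r with strict inequality for some r. Concretely: take G unweighted (m ≡ 1, b ≡ 1) and G' with k'₊(0) = 1, k'₋(r) = k'₊(r) for all r ≥ 1 with 1 ≥ k'₋(1) and k'₊(r) ≥ k'₋(r+1), chosen with some strict inequality; then G' has the same sphere curvatures as G and faster volume growth. -/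
noncomputable def kp (b m : ℕ → ℝ) (r : ℕ) : ℝ := b r / m r

noncomputable def km (b m : ℕ → ℝ) : ℕ → ℝ
  | 0 => 0
  | r + 1 => b r / m (r + 1)

/-- Ollivier sphere curvature of a birth-death chain, for `r ≥ 1`. -/
noncomputable def sk (b m : ℕ → ℝ) (r : ℕ) : ℝ :=
  (km b m r - kp b m r) - (km b m (r - 1) - kp b m (r - 1))

theorem stmt_7 :
    ∃ m b m' b' : ℕ → ℝ,
      (∀ r, 0 < m r) ∧ (∀ r, 0 < b r) ∧ (∀ r, 0 < m' r) ∧ (∀ r, 0 < b' r) ∧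
      m 0 = 1 ∧ m' 0 = 1 ∧
      kp b m 0 = 1 ∧ kp b' m' 0 = 1 ∧
      (∀ r ≥ 1, sk b m r = sk b' m' r) ∧
      (∀ r, m' r ≥ m r) ∧ (∃ r, m' r > m r) := by
  refine ⟨fun _ => 1, fun _ => 1, fun r => if r = 0 then 1 else 2, fun _ => 1,
    fun _ => one_pos, fun _ => one_pos, ?_, fun _ => one_pos, rfl, by simp,
    by simp [kp], by simp [kp], ?_, ?_, ⟨1, by norm_num⟩⟩
  · intro r
    by_cases h : r = 0 <;> simp [h]
  · rintro (_ | (_ | n)) hr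
    · omega
    · simp [sk, km, kp]
    · simp [sk, km, kp]
  · intro r
    by_cases h : r = 0 <;> simp [h]
end

section
/- Let G be the unweighted birth-death chain on ℕ (m ≡ 1, b ≡ 1) and G' the birth-death chain with m'(r) = r + 1 and b'(r) = (r+1)^{-2} (weight of edge {r, r+1}). Then k'₊(r) − k'₋(r) ≤ k₊(r) − k₋(r) for all r ≥ 0 (i.e. G' has a larger Laplacian of the distance function), yet m'(r) ≥ m(r) for all r, with strict inequality for all r ≥ 1. Hence a comparison of k₊ − k₋ alone does not imply a volume comparison. -/
/-! The difference `k₊(r) - k₋(r)` is `b(0)/m(0)` at the root and `(b(r) - b(r-1))/m(r)` beyond it,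
so it only sees whether the edge weights grow: beyond the root it is `≤ 0` for the decreasing weights
`(r+1)⁻²` of `G'` and `= 0` for the constant weights of `G`, while at the root both chains give `1`. -/

section BirthDeath

variable (b m : ℕ → ℝ)

theorem kp_sub_km_zero : kp b m 0 - km b m 0 = b 0 / m 0 := by
  simp [kp, km]

theorem kp_sub_km_succ (r : ℕ) : kp b m (r + 1) - km b m (r + 1) = (b (r + 1) - b r) / m (r + 1) := by
  simp only [kp, km, sub_div]

variable {b m}

theorem kp_sub_km_succ_nonpos_of_antitone (hb : Antitone b) (hm : ∀ r, 0 ≤ m r) (r : ℕ) :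
    kp b m (r + 1) - km b m (r + 1) ≤ 0 := by
  rw [kp_sub_km_succ]
  exact div_nonpos_of_nonpos_of_nonneg (sub_nonpos.mpr (hb r.le_succ)) (hm _)

end BirthDeath

theorem antitone_natCast_add_one_zpow_neg_two : Antitone fun r : ℕ => ((r : ℝ) + 1) ^ (-2 : ℤ) := by
  intro r s hrs
  have : (r : ℝ) ≤ s := by exact_mod_cast hrs
  simp only [zpow_neg, zpow_ofNat]
  gcongr

theorem stmt_8 :
    let m : ℕ → ℝ := fun _ => 1
    let b : ℕ → ℝ := fun _ => 1
    let m' : ℕ → ℝ := fun r => (r : ℝ) + 1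
    let b' : ℕ → ℝ := fun r => ((r : ℝ) + 1) ^ (-2 : ℤ)
    (∀ r, kp b' m' r - km b' m' r ≤ kp b m r - km b m r) ∧
    (∀ r, m' r ≥ m r) ∧ (∀ r ≥ 1, m' r > m r) := by
  intro m b m' b'
  refine ⟨fun r => ?_, fun r => ?_, fun r hr => ?_⟩
  · cases r with
    | zero => simp [kp_sub_km_zero, m, b, m', b']
    | succ r =>
      rw [kp_sub_km_succ b m, sub_self, zero_div]
      exact kp_sub_km_succ_nonpos_of_antitone antitone_natCast_add_one_zpow_neg_two
        (fun r => by positivity) r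
  · simp [m, m']
  · simp only [m, m', gt_iff_lt, lt_add_iff_pos_left, Nat.cast_pos]
    exact hr
end

section
/- Let m : ℕ → (0,∞) and b : ℕ → (0,∞) define a birth-death chain and suppose that a second birth-death chain (m', b') satisfies, for all r ≥ R (for some fixed R ≥ 1): b(r)/m(r) ≥ b'(r)/m'(r) and b(r−1)/m(r) ≤ b'(r−1)/m'(r). Set C = max over 0 ≤ r ≤ R of m'(r)/m(r). Then for all r ≥ 0, C·m(r) ≥ m'(r). (Proof: for r ≥ R use the identity m(r+1) = m(r)·k₊(r)/k₋(r+1) and induct.) -/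
theorem stmt_12 (m b m' b' : ℕ → ℝ) (R : ℕ) (hR : 1 ≤ R)
    (hm : ∀ r, 0 < m r) (hb : ∀ r, 0 < b r)
    (hm' : ∀ r, 0 < m' r) (hb' : ∀ r, 0 < b' r)
    (hout : ∀ r ≥ R, b r / m r ≥ b' r / m' r)
    (hin : ∀ r ≥ R, b (r - 1) / m r ≤ b' (r - 1) / m' r) :
    ∀ r, ((Finset.Icc 0 R).sup' ⟨0, by simp⟩ (fun i => m' i / m i)) * m r ≥ m' r := by
  set C := (Finset.Icc 0 R).sup' ⟨0, by simp⟩ (fun i => m' i / m i) with hC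
  intro r
  induction r with
  | zero =>
    have h0 : m' 0 / m 0 ≤ C :=
      Finset.le_sup' (fun i => m' i / m i) (by simp : (0:ℕ) ∈ Finset.Icc 0 R)
    have := hm 0
    rw [div_le_iff₀ this] at h0
    linarith
  | succ s ih =>
    by_cases hs : s + 1 ≤ R
    · have h0 : m' (s+1) / m (s+1) ≤ C :=
        Finset.le_sup' (fun i => m' i / m i) (by simp [hs] : s+1 ∈ Finset.Icc 0 R)
      have := hm (s+1)
      rw [div_le_iff₀ this] at h0
      linarith
    · have hsR : R ≤ s := by omega
      have h1 := hout s hsR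
      have h2 := hin (s+1) (by omega)
      simp only [Nat.add_sub_cancel] at h2
      have hms := hm s; have hms1 := hm (s+1)
      have hms' := hm' s; have hms1' := hm' (s+1)
      have hbs := hb s; have hbs' := hb' s
      have e1 : b' s * m s ≤ b s * m' s := by
        rw [ge_iff_le, div_le_div_iff₀ hms' hms] at h1; linarith
      have e2 : b s * m' (s+1) ≤ b' s * m (s+1) := by
        rw [div_le_div_iff₀ hms1 hms1'] at h2; linarith
      have e3 : m' (s+1) * m s ≤ m' s * m (s+1) := by nlinarith
      nlinarith [mul_pos hms hms1]
end
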